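/- arXiv:2203.14147 — 4 statements merged into one kernel-verified Lean document; each statement's English description precedes it below -/
import Mathlib

section
/- Let A be a complete atomic Boolean algebra, let δ : A → A be completely join-preserving, and let β : A → A be antitone with a Galois adjoint ρ : A → A satisfying (β l ≤ n ↔ ρ n ≤ l) for all l, n. Then for every coatom o and every coatom n of A, the following are equivalent: (1) there exist an atom k and a coatom l such that k ≤ lᶜ, nᶜ ≤ β l, and oᶜ ≤ δ k; (2) oᶜ ≤ δ (ρ n). -/
lemma atom_le_of_inf_ne_bot {A : Type*} [CompleteAtomicBooleanAlgebra A] {a x : A}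
    (ha : IsAtom a) (h : a ⊓ x ≠ ⊥) : a ≤ x := by
  rcases (ha.le_iff.mp inf_le_left) with h1 | h1
  · exact absurd h1 h
  · exact h1 ▸ inf_le_right

lemma le_of_inf_compl_eq_bot {A : Type*} [CompleteAtomicBooleanAlgebra A] {x l : A}
    (h : x ⊓ lᶜ = ⊥) : x ≤ l :=
  sdiff_eq_bot_iff.mp (by rwa [sdiff_eq])

theorem correctnessLem_single {A : Type*} [CompleteAtomicBooleanAlgebra A]
    (δ : A → A) (hδ : ∀ S : Set A, δ (sSup S) = sSup (δ '' S))
    (β ρ : A → A) (hβ : Antitone β)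
    (adj : ∀ l n : A, β l ≤ n ↔ ρ n ≤ l)
    (o n : A) (ho : IsCoatom o) (hn : IsCoatom n) :
    (∃ k l : A, IsAtom k ∧ IsCoatom l ∧ k ≤ lᶜ ∧ nᶜ ≤ β l ∧ oᶜ ≤ δ k) ↔
      oᶜ ≤ δ (ρ n) := by
  have hδmono : Monotone δ := by
    intro a b hab
    have h1 : b = sSup {a, b} := by simp [sup_eq_right.mpr hab]
    rw [h1, hδ]
    exact le_sSup ⟨a, by simp, rfl⟩
  constructor
  · rintro ⟨k, l, hk, hl, hkl, hnl, hok⟩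
    have hβln : ¬ β l ≤ n := by
      intro h
      have h2 : nᶜ ≤ n := le_trans hnl h
      exact hn.1 (top_le_iff.mp (compl_sup_eq_top (x := n) ▸ sup_le h2 le_rfl))
    have hρnl : ¬ ρ n ≤ l := fun h => hβln ((adj l n).mpr h)
    have hlc : lᶜ ≤ ρ n := by
      apply atom_le_of_inf_ne_bot hl.compl
      intro h
      exact hρnl (le_of_inf_compl_eq_bot (by rwa [inf_comm] at h))
    exact le_trans hok (hδmono (le_trans hkl hlc))
  · intro h
    have hρ : ρ n = sSup {a : A | IsAtom a ∧ a ≤ ρ n} := (sSup_atoms_le_eq _).symm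
    rw [hρ, hδ] at h
    have hoc : IsAtom oᶜ := ho.compl
    have hne : ∃ s ∈ δ '' {a : A | IsAtom a ∧ a ≤ ρ n}, oᶜ ⊓ s ≠ ⊥ := by
      by_contra hc
      push_neg at hc
      have hb : oᶜ ⊓ sSup (δ '' {a : A | IsAtom a ∧ a ≤ ρ n}) = ⊥ := by
        rw [inf_sSup_eq]
        apply le_antisymm _ bot_le
        exact iSup₂_le fun s hs => (hc s hs).le
      rw [inf_eq_left.mpr h] at hb
      exact hoc.1 hb
    obtain ⟨s, ⟨k, ⟨hk, hkρ⟩, rfl⟩, hs⟩ := hne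
    have hok : oᶜ ≤ δ k := atom_le_of_inf_ne_bot hoc hs
    refine ⟨k, kᶜ, hk, hk.compl, by rw [compl_compl], ?_, hok⟩
    have hβn : ¬ β kᶜ ≤ n := by
      intro hle
      have h2 : k ≤ k ⊓ kᶜ := le_inf le_rfl (hkρ.trans ((adj _ _).mp hle))
      rw [inf_compl_eq_bot] at h2
      exact hk.1 (le_bot_iff.mp h2)
    apply atom_le_of_inf_ne_bot hn.compl
    intro hbot
    exact hβn (le_of_inf_compl_eq_bot (by rwa [inf_comm] at hbot))
end

section
/- Let A be a complete atomic Boolean algebra, let δ : Aᵏ → A be completely join-preserving in each coordinate, and for each i let βᵢ : A → A have an adjoint ρᵢ : A → A with (βᵢ l ≤ n ↔ ρᵢ n ≤ l) for all l, n. Then for all coatoms n₁,…,nₖ and every coatom o, the following are equivalent: (1) there exist atoms k₁,…,kₖ and coatoms l₁,…,lₖ with kᵢ ≤ lᵢᶜ and nᵢᶜ ≤ βᵢ lᵢ for each i, and oᶜ ≤ δ (k₁,…,kₖ); (2) oᶜ ≤ δ (ρ₁ n₁, …, ρₖ nₖ). -/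
section Helpers

variable {A : Type*} [CompleteAtomicBooleanAlgebra A]

lemma coatom_not_le_iff {l x : A} (hl : IsCoatom l) : ¬ x ≤ l ↔ lᶜ ≤ x := by
  constructor
  · intro h
    have htop : x ⊔ l = ⊤ := hl.2 _ (lt_of_le_of_ne le_sup_right
      (fun he => h (sup_eq_right.mp he.symm)))
    calc lᶜ = lᶜ ⊓ (x ⊔ l) := by rw [htop, inf_top_eq]
      _ = (lᶜ ⊓ x) ⊔ (lᶜ ⊓ l) := inf_sup_left _ _ _
      _ = lᶜ ⊓ x := by rw [compl_inf_eq_bot, sup_bot_eq]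
      _ ≤ x := inf_le_right
  · intro h hxl
    have : lᶜ ≤ l := h.trans hxl
    have : lᶜ = ⊥ := le_antisymm (by simpa using le_inf this le_rfl) bot_le
    exact (hl.compl).1 this

lemma atom_le_sSup {a : A} (ha : IsAtom a) {S : Set A} (h : a ≤ sSup S) :
    ∃ s ∈ S, a ≤ s := by
  by_contra hc
  push_neg at hc
  have : a = a ⊓ sSup S := (inf_eq_left.mpr h).symm
  rw [inf_sSup_eq] at this
  have hb : ∀ b ∈ S, a ⊓ b = ⊥ := by
    intro b hb
    rcases ha.le_iff.mp (inf_le_left : a ⊓ b ≤ a) with h0 | h0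
    · exact h0
    · exact absurd (inf_eq_left.mp h0) (hc b hb)
  have : a = ⊥ := by
    rw [this]
    exact le_antisymm (iSup₂_le fun b hbS => (hb b hbS).le) bot_le
  exact ha.1 this

end Helpers

section Delta

variable {A : Type*} [CompleteAtomicBooleanAlgebra A] {κ : ℕ}
  {δ : (Fin κ → A) → A}
  (hδ : ∀ (i : Fin κ) (f : Fin κ → A) (S : Set A),
    δ (Function.update f i (sSup S)) = sSup ((fun s => δ (Function.update f i s)) '' S))

include hδ

lemma delta_mono1 (i : Fin κ) (f : Fin κ → A) {x y : A} (hxy : x ≤ y) :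
    δ (Function.update f i x) ≤ δ (Function.update f i y) := by
  have h := hδ i f {x, y}
  have hsup : sSup ({x, y} : Set A) = y := by
    simp [sSup_pair, sup_eq_right.mpr hxy]
  rw [hsup] at h
  rw [h]
  exact le_sSup ⟨x, Set.mem_insert _ _, rfl⟩

lemma delta_mono {f g : Fin κ → A} (hfg : ∀ i, f i ≤ g i) : δ f ≤ δ g := by
  classical
  have key : ∀ s : Finset (Fin κ),
      δ f ≤ δ (fun i => if i ∈ s then g i else f i) := by
    intro s
    induction s using Finset.induction with
    | empty => simp
    | @insert a s ha ih =>
      refine ih.trans ?_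
      have heq1 : (fun i => if i ∈ s then g i else f i)
          = Function.update (fun i => if i ∈ s then g i else f i) a (f a) := by
        funext i
        rcases eq_or_ne i a with rfl | hne
        · simp [Function.update, ha]
        · simp [Function.update, hne]
      have heq2 : (fun i => if i ∈ insert a s then g i else f i)
          = Function.update (fun i => if i ∈ s then g i else f i) a (g a) := by
        funext i
        rcases eq_or_ne i a with rfl | hne
        · simp [Function.update]
        · simp [Function.update, hne]
      rw [heq1, heq2]
      exact delta_mono1 hδ a _ (hfg a)
  have := key Finset.univ
  simpa using this

lemma delta_atomize {f : Fin κ → A} {a : A} (ha : IsAtom a) (h : a ≤ δ f) :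
    ∃ k : Fin κ → A, (∀ i, IsAtom (k i)) ∧ (∀ i, k i ≤ f i) ∧ a ≤ δ k := by
  classical
  have key : ∀ s : Finset (Fin κ), ∃ g : Fin κ → A,
      (∀ i ∈ s, IsAtom (g i) ∧ g i ≤ f i) ∧ (∀ i ∉ s, g i = f i) ∧ a ≤ δ g := by
    intro s
    induction s using Finset.induction with
    | empty => exact ⟨f, by simp, by simp, h⟩
    | @insert c s hc ih =>
      obtain ⟨g, hg1, hg2, hg3⟩ := ih
      have hgc : g c = f c := hg2 c hc
      have hsup : g c = sSup {b | IsAtom b ∧ b ≤ g c} := (sSup_atoms_le_eq _).symm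
      have hupd : g = Function.update g c (sSup {b | IsAtom b ∧ b ≤ g c}) := by
        funext i
        rcases eq_or_ne i c with rfl | hne
        · simp only [Function.update_self]; exact hsup
        · simp [Function.update, hne]
      rw [hupd, hδ c g {b | IsAtom b ∧ b ≤ g c}] at hg3
      obtain ⟨x, ⟨b, ⟨hb1, hb2⟩, rfl⟩, hax⟩ := atom_le_sSup ha hg3
      refine ⟨Function.update g c b, ?_, ?_, hax⟩
      · intro i hi
        rcases eq_or_ne i c with rfl | hne
        · simp only [Function.update_self]
          exact ⟨hb1, hb2.trans hgc.le⟩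
        · simp only [Function.update, dif_neg hne]
          exact hg1 i ((Finset.mem_insert.mp hi).resolve_left hne)
      · intro i hi
        have hne : i ≠ c := fun he => hi (he ▸ Finset.mem_insert_self c s)
        simp only [Function.update, dif_neg hne]
        exact hg2 i (fun hmem => hi (Finset.mem_insert_of_mem hmem))
  obtain ⟨g, hg1, _, hg3⟩ := key Finset.univ
  exact ⟨g, fun i => (hg1 i (Finset.mem_univ i)).1,
    fun i => (hg1 i (Finset.mem_univ i)).2, hg3⟩

end Delta

theorem correctnessLem {A : Type*} [CompleteAtomicBooleanAlgebra A] {κ : ℕ}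
    (δ : (Fin κ → A) → A)
    (hδ : ∀ (i : Fin κ) (f : Fin κ → A) (S : Set A),
      δ (Function.update f i (sSup S)) = sSup ((fun s => δ (Function.update f i s)) '' S))
    (β ρ : Fin κ → A → A)
    (adj : ∀ (i : Fin κ) (l n : A), β i l ≤ n ↔ ρ i n ≤ l)
    (n : Fin κ → A) (hn : ∀ i, IsCoatom (n i)) (o : A) (ho : IsCoatom o) :
    (∃ k l : Fin κ → A, (∀ i, IsAtom (k i)) ∧ (∀ i, IsCoatom (l i)) ∧
        (∀ i, k i ≤ (l i)ᶜ) ∧ (∀ i, (n i)ᶜ ≤ β i (l i)) ∧ oᶜ ≤ δ k) ↔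
      oᶜ ≤ δ (fun i => ρ i (n i)) := by
  constructor
  · rintro ⟨k, l, hk, hl, hkl, hnβ, hoδ⟩
    refine hoδ.trans (delta_mono hδ fun i => ?_)
    -- k i ≤ (l i)ᶜ ≤ ρ i (n i)
    have h1 : ¬ β i (l i) ≤ n i := by
      intro hle
      have : (n i)ᶜ ≤ n i := (hnβ i).trans hle
      have : (n i)ᶜ = ⊥ := le_antisymm (by simpa using le_inf this le_rfl) bot_le
      exact ((hn i).compl).1 this
    have h2 : ¬ ρ i (n i) ≤ l i := fun hle => h1 ((adj i _ _).mpr hle)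
    have h3 : (l i)ᶜ ≤ ρ i (n i) := (coatom_not_le_iff (hl i)).mp h2
    exact (hkl i).trans h3
  · intro hle
    obtain ⟨k, hk1, hk2, hk3⟩ := delta_atomize hδ ho.compl hle
    refine ⟨k, fun i => (k i)ᶜ, hk1, fun i => (hk1 i).compl, fun i => by simp, ?_, hk3⟩
    intro i
    by_contra hβ
    -- ¬ (n i)ᶜ ≤ β i (k i)ᶜ  means β i (k i)ᶜ ≤ n i
    have hβn : β i ((k i)ᶜ) ≤ n i := by
      by_contra hnot
      exact hβ ((coatom_not_le_iff (hn i)).mp hnot)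
    have hρ : ρ i (n i) ≤ (k i)ᶜ := (adj i _ _).mp hβn
    have : k i ≤ (k i)ᶜ := (hk2 i).trans hρ
    have hbot : k i = ⊥ := le_antisymm (by simpa using le_inf le_rfl this) bot_le
    exact (hk1 i).1 hbot
end

section
/- Let A be a complete atomic Boolean algebra and ψ : A × A → A a map that is completely meet-preserving in its first coordinate and completely join-reversing in its second coordinate. Then for all a, b ∈ A: ψ(b, a) = sInf {ψ(n, h) | h an atom, n a coatom, h ≤ a, b ≤ n}. -/
lemma sInf_coatoms_ge_eq {A : Type*} [CompleteLattice A] [IsCoatomistic A] (b : A) :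
    sInf { n : A | IsCoatom n ∧ b ≤ n } = b :=
  sSup_atoms_le_eq (α := Aᵒᵈ) (OrderDual.toDual b)

theorem psiR_soundness {A : Type*} [CompleteAtomicBooleanAlgebra A]
    (ψ : A → A → A)
    (hmeet : ∀ (S : Set A) (a : A), ψ (sInf S) a = sInf ((fun s => ψ s a) '' S))
    (hrev : ∀ (b : A) (S : Set A), ψ b (sSup S) = sInf ((fun s => ψ b s) '' S))
    (a b : A) :
    ψ b a = sInf {x | ∃ h n : A, IsAtom h ∧ IsCoatom n ∧ h ≤ a ∧ b ≤ n ∧ x = ψ n h} := by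
  set N : Set A := { n | IsCoatom n ∧ b ≤ n }
  set H : Set A := { h | IsAtom h ∧ h ≤ a }
  have hb : b = sInf N := (sInf_coatoms_ge_eq b).symm
  have ha : a = sSup H := (sSup_atoms_le_eq a).symm
  have key : ∀ n ∈ N, ψ n a = sInf ((fun s => ψ n s) '' H) := by
    intro n _
    conv_lhs => rw [ha]
    exact hrev n H
  have lhs : ψ b a = sInf ((fun s => ψ s a) '' N) := by
    rw [hb]; exact hmeet N a
  rw [lhs]
  apply le_antisymm
  · apply le_sInf
    rintro x ⟨h, n, hat, hco, hha, hbn, rfl⟩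
    refine le_trans (sInf_le ⟨n, ⟨hco, hbn⟩, rfl⟩) ?_
    show ψ n a ≤ _
    rw [key n ⟨hco, hbn⟩]
    exact sInf_le ⟨h, ⟨hat, hha⟩, rfl⟩
  · apply le_sInf
    rintro x ⟨n, hn, rfl⟩
    show _ ≤ ψ n a
    rw [key n hn]
    apply le_sInf
    rintro y ⟨h, hh, rfl⟩
    exact sInf_le ⟨h, n, hh.1, hn.1, hh.2, hn.2, rfl⟩
end

section
/- For any binary relation R on a set W, the formula A → ◇□A, i.e. the statement that for every valuation v and every world x, v x → ∃y, R x y ∧ ∀z, R y z → v z, is valid on (W,R) if and only if every world x has an R-successor y all of whose R-successors equal x: ∀x, ∃y, R x y ∧ ∀z, R y z → z = x. -/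
theorem diamondBox_iff {W : Type*} (R : W → W → Prop) :
    (∀ (v : W → Prop) (x : W), v x → ∃ y, R x y ∧ ∀ z, R y z → v z) ↔
      (∀ x, ∃ y, R x y ∧ ∀ z, R y z → z = x) := by
  constructor
  · intro h x
    exact h (· = x) x rfl
  · intro h v x hx
    obtain ⟨y, hxy, hz⟩ := h x
    exact ⟨y, hxy, fun z hyz => (hz z hyz) ▸ hx⟩
end
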